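/- arXiv:2404.13525 — 6 statements merged into one kernel-verified Lean document; each statement's English description precedes it below -/
import Mathlib

section
/- Given real matrices A ∈ ℝ^{m×k}, B ∈ ℝ^{l×n}, C ∈ ℝ^{m×n}, the equation AX − YB = C has a solution X ∈ ℝ^{k×n}, Y ∈ ℝ^{m×l} if and only if (I_m − A A†) C (I_n − B† B) = 0, where A† and B† are Moore–Penrose pseudoinverses. -/
open Matrix

/-- `Ad` is the Moore–Penrose pseudoinverse of `A`. -/
def IsMoorePenrose {m n : ℕ} (A : Matrix (Fin m) (Fin n) ℝ)
    (Ad : Matrix (Fin n) (Fin m) ℝ) : Prop :=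
  A * Ad * A = A ∧ Ad * A * Ad = Ad ∧ (A * Ad)ᵀ = A * Ad ∧ (Ad * A)ᵀ = Ad * A

theorem stmt6 (m k l n : ℕ)
    (A : Matrix (Fin m) (Fin k) ℝ) (B : Matrix (Fin l) (Fin n) ℝ)
    (C : Matrix (Fin m) (Fin n) ℝ)
    (Ad : Matrix (Fin k) (Fin m) ℝ) (Bd : Matrix (Fin n) (Fin l) ℝ)
    (hA : IsMoorePenrose A Ad) (hB : IsMoorePenrose B Bd) :
    (∃ (X : Matrix (Fin k) (Fin n) ℝ) (Y : Matrix (Fin m) (Fin l) ℝ),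
        A * X - Y * B = C) ↔
      (1 - A * Ad) * C * (1 - Bd * B) = 0 := by
  have h1 : (1 - A * Ad) * A = 0 := by
    rw [Matrix.sub_mul, Matrix.one_mul, hA.1, sub_self]
  have h2 : B * (1 - Bd * B) = 0 := by
    rw [Matrix.mul_sub, Matrix.mul_one, ← Matrix.mul_assoc, hB.1, sub_self]
  constructor
  · rintro ⟨X, Y, rfl⟩
    have e : (1 - A * Ad) * (A * X - Y * B) * (1 - Bd * B)
        = ((1 - A * Ad) * A) * (X * (1 - Bd * B))
          - ((1 - A * Ad) * Y) * (B * (1 - Bd * B)) := by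
      simp only [Matrix.mul_sub, Matrix.sub_mul, Matrix.mul_one, Matrix.one_mul,
        Matrix.mul_assoc]
      abel
    rw [e, h1, h2, Matrix.zero_mul, Matrix.mul_zero, sub_self]
  · intro h
    refine ⟨Ad * C, -((1 - A * Ad) * C * Bd), ?_⟩
    have key : (1 - A * Ad) * C * (Bd * B) = (1 - A * Ad) * C := by
      have h' := h
      rw [Matrix.mul_sub, Matrix.mul_one, sub_eq_zero] at h'
      exact h'.symm
    have e : A * (Ad * C) - (-((1 - A * Ad) * C * Bd)) * B
        = A * Ad * C + (1 - A * Ad) * C * (Bd * B) := by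
      simp only [Matrix.neg_mul, sub_neg_eq_add, Matrix.mul_assoc]
    rw [e, key, Matrix.sub_mul, Matrix.one_mul, add_sub_cancel]
end

section
/- Given real matrices A ∈ ℝ^{m×k}, B ∈ ℝ^{l×n}, C ∈ ℝ^{m×n} with (I_m − A A†) C (I_n − B† B) = 0, for arbitrary W ∈ ℝ^{k×n} and Z ∈ ℝ^{m×l}, the pair X = A† C + A† Z B + (I_k − A† A) W and Y = −(I_m − A A†) C B† + Z − (I_m − A A†) Z B B† satisfies AX − YB = C. -/
open Matrix

theorem stmt7 (m k l n : ℕ)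
    (A : Matrix (Fin m) (Fin k) ℝ) (B : Matrix (Fin l) (Fin n) ℝ)
    (C : Matrix (Fin m) (Fin n) ℝ)
    (Ad : Matrix (Fin k) (Fin m) ℝ) (Bd : Matrix (Fin n) (Fin l) ℝ)
    (hA : IsMoorePenrose A Ad) (hB : IsMoorePenrose B Bd)
    (hC : (1 - A * Ad) * C * (1 - Bd * B) = 0)
    (W : Matrix (Fin k) (Fin n) ℝ) (Z : Matrix (Fin m) (Fin l) ℝ) :
    A * (Ad * C + Ad * Z * B + (1 - Ad * A) * W) -
      (-((1 - A * Ad) * C * Bd) + Z - (1 - A * Ad) * Z * B * Bd) * B = C := by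
  obtain ⟨hA1, -, -, -⟩ := hA
  obtain ⟨hB1, -, -, -⟩ := hB
  have e : (1 - A * Ad) * C * (Bd * B) = (1 - A * Ad) * C := by
    have h := hC
    rw [Matrix.mul_sub, Matrix.mul_one, sub_eq_zero] at h
    exact h.symm
  have hA1' : A * (Ad * A) = A := by rw [← Matrix.mul_assoc]; exact hA1
  have hB1' : B * (Bd * B) = B := by rw [← Matrix.mul_assoc]; exact hB1
  simp only [Matrix.mul_add, Matrix.add_mul, Matrix.sub_mul, Matrix.mul_sub, Matrix.neg_mul,
    Matrix.one_mul, Matrix.mul_one, Matrix.mul_assoc] at *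
  have h3 : A * (Ad * (A * W)) = A * W := by
    rw [← Matrix.mul_assoc Ad A W, ← Matrix.mul_assoc A (Ad * A) W, hA1']
  rw [hB1', h3, e]
  abel
end

section
/- Let A = A_s + A_i·ε be an m×n dual real matrix with Q = Q_s + Q_i ε an orthogonal dual m×m matrix and R = R_s + R_i ε an m×n dual matrix such that A = QR. Then A_s = Q_s R_s and Q_i = Q_s P for some skew-symmetric matrix P ∈ ℝ^{m×m}, and R_i = Q_sᵀ A_i − P R_s. -/
open Matrix

/-- A dual real matrix `A = A_s + A_i ε` with `ε² = 0`. -/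
structure Dual (m n : Type*) where
  s : Matrix m n ℝ
  i : Matrix m n ℝ

/-- Multiplication of dual matrices. -/
def dmul {m n p : Type*} [Fintype n] (A : Dual m n) (B : Dual n p) : Dual m p :=
  ⟨A.s * B.s, A.s * B.i + A.i * B.s⟩

/-- Transpose of a dual matrix. -/
def dT {m n : Type*} (A : Dual m n) : Dual n m := ⟨A.sᵀ, A.iᵀ⟩

/-- The identity dual matrix. -/
def dI {n : Type*} [DecidableEq n] : Dual n n := ⟨1, 0⟩

theorem stmt9 (m n : ℕ)
    (A : Dual (Fin m) (Fin n)) (Q : Dual (Fin m) (Fin m)) (R : Dual (Fin m) (Fin n))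
    (hQorth : dmul (dT Q) Q = dI)
    (hA : A = dmul Q R) :
    A.s = Q.s * R.s ∧
      ∃ P : Matrix (Fin m) (Fin m) ℝ, Pᵀ = -P ∧
        Q.i = Q.s * P ∧ R.i = Q.sᵀ * A.i - P * R.s := by
  have h1 : Q.sᵀ * Q.s = 1 := congrArg Dual.s hQorth
  have h2 : Q.sᵀ * Q.i + Q.iᵀ * Q.s = (0 : Matrix (Fin m) (Fin m) ℝ) :=
    congrArg Dual.i hQorth
  have hs : A.s = Q.s * R.s := congrArg Dual.s hA
  have hi : A.i = Q.s * R.i + Q.i * R.s := congrArg Dual.i hA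
  have hQQT : Q.s * Q.sᵀ = 1 :=
    mul_eq_one_comm.mp h1
  refine ⟨hs, Q.sᵀ * Q.i, ?_, ?_, ?_⟩
  · have := h2
    rw [add_eq_zero_iff_eq_neg] at this
    calc (Q.sᵀ * Q.i)ᵀ = Q.iᵀ * Q.s := by simp [Matrix.transpose_mul]
    _ = -(Q.sᵀ * Q.i) := by rw [this, neg_neg]
  · rw [← Matrix.mul_assoc, hQQT, Matrix.one_mul]
  · rw [hi]
    rw [Matrix.mul_add, ← Matrix.mul_assoc, ← Matrix.mul_assoc, h1, Matrix.one_mul]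
    rw [Matrix.mul_assoc]
    abel
end

section
/- Let A_s ∈ ℝ^{m×n} (m ≥ n) have full column rank with thin QR decomposition A_s = Q_s R_s (Q_s ∈ ℝ^{m×n} with orthonormal columns, R_s ∈ ℝ^{n×n} upper triangular and invertible), and let A_i ∈ ℝ^{m×n}. Then for any skew-symmetric P ∈ ℝ^{n×n}, defining Q_i = (I_m − Q_s Q_sᵀ) A_i R_s⁻¹ + Q_s P and R_i = Q_sᵀ A_i − P R_s, one has A_i = Q_s R_i + Q_i R_s and Q_sᵀ Q_i + Q_iᵀ Q_s = 0 (so Q = Q_s + Q_i ε has orthogonal columns as a dual matrix). -/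
open Matrix

theorem stmt11 (m n : ℕ) (hmn : n ≤ m)
    (As Ai : Matrix (Fin m) (Fin n) ℝ)
    (Qs : Matrix (Fin m) (Fin n) ℝ) (Rs : Matrix (Fin n) (Fin n) ℝ)
    (hrank : As.rank = n)
    (hQ : Qsᵀ * Qs = 1)
    (hRtri : ∀ (i j : Fin n), (j : ℕ) < (i : ℕ) → Rs i j = 0)
    (hRinv : IsUnit Rs.det)
    (hQR : As = Qs * Rs)
    (P : Matrix (Fin n) (Fin n) ℝ) (hP : Pᵀ = -P) :
    Ai = Qs * (Qsᵀ * Ai - P * Rs) + ((1 - Qs * Qsᵀ) * Ai * Rs⁻¹ + Qs * P) * Rs ∧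
      Qsᵀ * ((1 - Qs * Qsᵀ) * Ai * Rs⁻¹ + Qs * P) +
        ((1 - Qs * Qsᵀ) * Ai * Rs⁻¹ + Qs * P)ᵀ * Qs = 0 := by
  have hinv : Rs⁻¹ * Rs = 1 := Matrix.nonsing_inv_mul Rs hRinv
  have hz : Qsᵀ * (1 - Qs * Qsᵀ) = 0 := by
    rw [Matrix.mul_sub, Matrix.mul_one, ← Matrix.mul_assoc, hQ, Matrix.one_mul, sub_self]
  have h1 : Qsᵀ * ((1 - Qs * Qsᵀ) * Ai * Rs⁻¹ + Qs * P) = P := by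
    rw [Matrix.mul_add, ← Matrix.mul_assoc, ← Matrix.mul_assoc, hz, Matrix.zero_mul,
      Matrix.zero_mul, zero_add, ← Matrix.mul_assoc, hQ, Matrix.one_mul]
  constructor
  · simp only [Matrix.add_mul, Matrix.mul_assoc, hinv, Matrix.mul_one, Matrix.sub_mul,
      Matrix.one_mul, Matrix.mul_sub]
    abel
  · have h2 : ((1 - Qs * Qsᵀ) * Ai * Rs⁻¹ + Qs * P)ᵀ * Qs = -P := by
      have := congrArg Matrix.transpose h1
      rw [Matrix.transpose_mul, Matrix.transpose_transpose] at this
      rw [this, hP]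
    rw [h1, h2, add_neg_cancel]
end

section
/- Let Q_s ∈ ℝ^{m×n} have orthonormal columns (Q_sᵀ Q_s = I_n), let A_i ∈ ℝ^{m×n}, R_s ∈ ℝ^{n×n} invertible, and suppose Q_i ∈ ℝ^{m×n}, R_i ∈ ℝ^{n×n} satisfy A_i = Q_s R_i + Q_i R_s and Q_sᵀ Q_i + Q_iᵀ Q_s = 0. Then Q_i = (I_m − Q_s Q_sᵀ) A_i R_s⁻¹ + Q_s P and R_i = Q_sᵀ A_i − P R_s, where P = Q_sᵀ Q_i is skew-symmetric. -/
open Matrix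

theorem stmt12 (m n : ℕ)
    (Qs Ai Qi : Matrix (Fin m) (Fin n) ℝ) (Rs Ri : Matrix (Fin n) (Fin n) ℝ)
    (hQ : Qsᵀ * Qs = 1)
    (hRinv : IsUnit Rs.det)
    (hAi : Ai = Qs * Ri + Qi * Rs)
    (horth : Qsᵀ * Qi + Qiᵀ * Qs = 0) :
    (Qsᵀ * Qi)ᵀ = -(Qsᵀ * Qi) ∧
      Qi = (1 - Qs * Qsᵀ) * Ai * Rs⁻¹ + Qs * (Qsᵀ * Qi) ∧
      Ri = Qsᵀ * Ai - (Qsᵀ * Qi) * Rs := by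
  have hskew : (Qsᵀ * Qi)ᵀ = -(Qsᵀ * Qi) := by
    have := horth
    rw [Matrix.transpose_mul, Matrix.transpose_transpose]
    linear_combination (norm := noncomm_ring) this
  have hRi : Ri = Qsᵀ * Ai - (Qsᵀ * Qi) * Rs := by
    have : Qsᵀ * Ai = Ri + (Qsᵀ * Qi) * Rs := by
      rw [hAi]
      simp [Matrix.mul_add, ← Matrix.mul_assoc, hQ]
    rw [this]; abel
  refine ⟨hskew, ?_, hRi⟩
  have key : (1 - Qs * Qsᵀ) * Ai = Qi * Rs - Qs * (Qsᵀ * Qi) * Rs := by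
    rw [hAi]
    have h1 : Qs * Qsᵀ * (Qs * Ri) = Qs * Ri := by
      rw [Matrix.mul_assoc Qs Qsᵀ, ← Matrix.mul_assoc Qsᵀ, hQ, Matrix.one_mul]
    rw [Matrix.sub_mul, Matrix.one_mul, Matrix.mul_add, h1]
    simp [Matrix.mul_assoc]
  have hmul : ((1 - Qs * Qsᵀ) * Ai) * Rs⁻¹ = Qi - Qs * (Qsᵀ * Qi) := by
    rw [key, Matrix.sub_mul, Matrix.mul_assoc Qi, Matrix.mul_assoc (Qs * (Qsᵀ * Qi)),
      Matrix.mul_nonsing_inv _ hRinv, Matrix.mul_one, Matrix.mul_one]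
  rw [hmul]; abel
end

section
/- Let A = A_s + A_i·ε be an m×n dual real matrix with A_s of full column rank, and let A = QR = (Q_s + Q_i ε)(R_s + R_i ε) be a thin QR decomposition of A where Q has orthogonal columns (QᵀQ = I_n as dual matrices) and R_s is invertible upper triangular. Then the dual matrix A† := R_s⁻¹ Q_sᵀ + (R_s⁻¹ Q_iᵀ − R_s⁻¹ R_i R_s⁻¹ Q_sᵀ)·ε satisfies the four Moore–Penrose equations for dual matrices: A A† A = A, A† A A† = A†, (A A†)ᵀ = A A†, and (A† A)ᵀ = A† A. -/
open Matrix

theorem stmt15 (m n : ℕ)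
    (A : Dual (Fin m) (Fin n)) (Q : Dual (Fin m) (Fin n)) (R : Dual (Fin n) (Fin n))
    (hrank : A.s.rank = n)
    (hQorth : dmul (dT Q) Q = dI)
    (hRtri : ∀ (i j : Fin n), (j : ℕ) < (i : ℕ) → R.s i j = 0)
    (hRinv : IsUnit R.s.det)
    (hQR : A = dmul Q R) :
    dmul (dmul A ⟨R.s⁻¹ * Q.sᵀ, R.s⁻¹ * Q.iᵀ - R.s⁻¹ * R.i * R.s⁻¹ * Q.sᵀ⟩) A = A ∧
    dmul (dmul ⟨R.s⁻¹ * Q.sᵀ, R.s⁻¹ * Q.iᵀ - R.s⁻¹ * R.i * R.s⁻¹ * Q.sᵀ⟩ A)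
        ⟨R.s⁻¹ * Q.sᵀ, R.s⁻¹ * Q.iᵀ - R.s⁻¹ * R.i * R.s⁻¹ * Q.sᵀ⟩ =
      ⟨R.s⁻¹ * Q.sᵀ, R.s⁻¹ * Q.iᵀ - R.s⁻¹ * R.i * R.s⁻¹ * Q.sᵀ⟩ ∧
    dT (dmul A ⟨R.s⁻¹ * Q.sᵀ, R.s⁻¹ * Q.iᵀ - R.s⁻¹ * R.i * R.s⁻¹ * Q.sᵀ⟩) =
      dmul A ⟨R.s⁻¹ * Q.sᵀ, R.s⁻¹ * Q.iᵀ - R.s⁻¹ * R.i * R.s⁻¹ * Q.sᵀ⟩ ∧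
    dT (dmul ⟨R.s⁻¹ * Q.sᵀ, R.s⁻¹ * Q.iᵀ - R.s⁻¹ * R.i * R.s⁻¹ * Q.sᵀ⟩ A) =
      dmul ⟨R.s⁻¹ * Q.sᵀ, R.s⁻¹ * Q.iᵀ - R.s⁻¹ * R.i * R.s⁻¹ * Q.sᵀ⟩ A := by
  obtain ⟨Qs, Qi⟩ := Q
  obtain ⟨Rs, Ri⟩ := R
  obtain ⟨As, Ai⟩ := A
  simp only [dmul, dT, dI, Dual.mk.injEq] at hQorth hQR ⊢
  obtain ⟨h1, h2⟩ := hQorth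
  obtain ⟨hAs, hAi⟩ := hQR
  simp only at hRinv hAs hAi
  subst hAs hAi
  have hR1 : Rs * Rs⁻¹ = 1 := Matrix.mul_nonsing_inv _ hRinv
  have hR2 : Rs⁻¹ * Rs = 1 := Matrix.nonsing_inv_mul _ hRinv
  have h2' : Qiᵀ * Qs = -(Qsᵀ * Qi) := by
    linear_combination (norm := noncomm_ring) h2
  simp only [Matrix.mul_assoc, Matrix.mul_add, Matrix.add_mul, Matrix.mul_sub,
    Matrix.sub_mul, Matrix.transpose_mul, Matrix.transpose_add, Matrix.transpose_sub,
    Matrix.transpose_transpose]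
  have h1' : ∀ p (X : Matrix (Fin n) (Fin p) ℝ), Qsᵀ * (Qs * X) = X := fun p X => by
    rw [← Matrix.mul_assoc, h1, Matrix.one_mul]
  have hR1' : ∀ p (X : Matrix (Fin n) (Fin p) ℝ), Rs * (Rs⁻¹ * X) = X := fun p X => by
    rw [← Matrix.mul_assoc, hR1, Matrix.one_mul]
  have hR2' : ∀ p (X : Matrix (Fin n) (Fin p) ℝ), Rs⁻¹ * (Rs * X) = X := fun p X => by
    rw [← Matrix.mul_assoc, hR2, Matrix.one_mul]
  have hR1T : ∀ p (X : Matrix (Fin n) (Fin p) ℝ), Rs⁻¹ᵀ * (Rsᵀ * X) = X := fun p X => by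
    rw [← Matrix.mul_assoc, ← Matrix.transpose_mul, hR1, Matrix.transpose_one, Matrix.one_mul]
  have hR2T : ∀ p (X : Matrix (Fin n) (Fin p) ℝ), Rsᵀ * (Rs⁻¹ᵀ * X) = X := fun p X => by
    rw [← Matrix.mul_assoc, ← Matrix.transpose_mul, hR2, Matrix.transpose_one, Matrix.one_mul]
  have h2'' : ∀ p (X : Matrix (Fin n) (Fin p) ℝ), Qiᵀ * (Qs * X) = -(Qsᵀ * (Qi * X)) :=
    fun p X => by rw [← Matrix.mul_assoc, h2', Matrix.neg_mul, Matrix.mul_assoc]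
  have h1T : Qs * (Rs * (Rs⁻¹ * Qsᵀ)) = Qs * Qsᵀ := by rw [hR1']
  have hR2Tb : Rsᵀ * Rs⁻¹ᵀ = 1 := by
    rw [← Matrix.transpose_mul, hR2, Matrix.transpose_one]
  simp only [h1', hR1', hR2', hR1T, hR2T, h2'', h1, hR1, hR2, hR2Tb, Matrix.mul_one,
    Matrix.mul_smul, neg_one_smul, Matrix.mul_neg, Matrix.neg_mul]
  refine ⟨⟨?_, ?_⟩, ⟨?_, ?_⟩, ⟨?_, ?_⟩, ?_, ?_⟩ <;> first | trivial | abel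
end
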